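/- If G is a connected claw-free finite simple graph of order n with minimum degree at least 2, then Ψ⁺_g(G) ≥ n/2 and Ψ⁻_g(G) ≥ n/2; equivalently, 2·Ψ⁺_g(G) ≥ n and 2·Ψ⁻_g(G) ≥ n. -/

import Mathlib

namespace EnclavelessGame

variable {V : Type*} [Fintype V] [DecidableEq V]

/-- `v` is an enclave of `S` if `v ∈ S` and its closed neighborhood `N[v]` is contained in `S`. -/
def IsEnclave (G : SimpleGraph V) (S : Finset V) (v : V) : Prop :=
  v ∈ S ∧ ∀ u, G.Adj v u → u ∈ S

/-- `S` is enclaveless if it contains no enclave. -/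
def IsEnclaveless (G : SimpleGraph V) (S : Finset V) : Prop :=
  ∀ v, ¬ IsEnclave G S v

instance (G : SimpleGraph V) [DecidableRel G.Adj] (S : Finset V) :
    Decidable (IsEnclaveless G S) := by
  unfold IsEnclaveless IsEnclave
  infer_instance

/-- `D` is a dominating set: every vertex lies in the closed neighborhood
of some vertex of `D`. -/
def IsDominating (G : SimpleGraph V) (D : Finset V) : Prop :=
  ∀ v, ∃ u ∈ D, u = v ∨ G.Adj u v

/-- `D` is a minimal dominating set (minimal with respect to set inclusion). -/
def IsMinimalDominating (G : SimpleGraph V) (D : Finset V) : Prop :=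
  IsDominating G D ∧ ∀ D' ⊆ D, IsDominating G D' → D' = D

/-- `S` is a maximal enclaveless set (maximal with respect to set inclusion). -/
def IsMaximalEnclaveless (G : SimpleGraph V) (S : Finset V) : Prop :=
  IsEnclaveless G S ∧ ∀ T, S ⊆ T → IsEnclaveless G T → T = S

/-- The domination number `γ(G)`: minimum cardinality of a dominating set. -/
noncomputable def domNum (G : SimpleGraph V) : ℕ :=
  sInf {k | ∃ D : Finset V, IsDominating G D ∧ D.card = k}

/-- The upper domination number `Γ(G)`: maximum cardinality of a minimal dominating set. -/
noncomputable def upperDomNum (G : SimpleGraph V) : ℕ :=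
  sSup {k | ∃ D : Finset V, IsMinimalDominating G D ∧ D.card = k}

/-- The enclaveless number `Ψ(G)`: maximum cardinality of an enclaveless set. -/
noncomputable def enclavelessNum (G : SimpleGraph V) : ℕ :=
  sSup {k | ∃ S : Finset V, IsEnclaveless G S ∧ S.card = k}

/-- The lower enclaveless number `ψ(G)`: minimum cardinality of a maximal enclaveless set. -/
noncomputable def lowerEnclavelessNum (G : SimpleGraph V) : ℕ :=
  sInf {k | ∃ S : Finset V, IsMaximalEnclaveless G S ∧ S.card = k}

/-- The set of playable vertices given the set `S` of already chosen vertices: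
vertices `v ∉ S` such that `S ∪ {v}` is enclaveless. -/
def playableSet (G : SimpleGraph V) [DecidableRel G.Adj] (S : Finset V) : Finset V :=
  Finset.univ.filter (fun v => v ∉ S ∧ IsEnclaveless G (insert v S))

/-- The value of the competition-enclaveless game from position `S`: `maxTurn = true`
means it is Maximizer's turn (this computes `MaxVal S`), and `maxTurn = false` means it
is Minimizer's turn (this computes `MinVal S`). If no vertex is playable the value is
`|S|`; otherwise it is the max (resp. min) over playable `v` of the value of
`S ∪ {v}` with the turn switched. -/
def gameVal (G : SimpleGraph V) [DecidableRel G.Adj] (maxTurn : Bool) (S : Finset V) : ℕ :=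
  if h : (playableSet G S).Nonempty then
    if maxTurn then
      (playableSet G S).attach.sup' (by simpa using h)
        (fun v => gameVal G false (insert v.1 S))
    else
      (playableSet G S).attach.inf' (by simpa using h)
        (fun v => gameVal G true (insert v.1 S))
  else S.card
termination_by Sᶜ.card
decreasing_by
  all_goals
    have hv := v.2
    simp only [playableSet, Finset.mem_filter] at hv
    rw [Finset.compl_insert]
    exact Finset.card_erase_lt_of_mem (Finset.mem_compl.mpr hv.2.1)

/-- The Maximizer-start enclaveless game number `Ψ⁺_g(G) = MaxVal ∅`. -/
def maxStartGameNum (G : SimpleGraph V) [DecidableRel G.Adj] : ℕ := gameVal G true ∅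

/-- The Minimizer-start enclaveless game number `Ψ⁻_g(G) = MinVal ∅`. -/
def minStartGameNum (G : SimpleGraph V) [DecidableRel G.Adj] : ℕ := gameVal G false ∅

/-- `G` is claw-free: it contains no induced `K_{1,3}`, i.e. no vertex has three
pairwise non-adjacent neighbors. -/
def ClawFree (G : SimpleGraph V) : Prop :=
  ¬ ∃ (v : V) (T : Finset V), T.card = 3 ∧ (∀ u ∈ T, G.Adj v u) ∧
      ∀ a ∈ T, ∀ b ∈ T, a ≠ b → ¬ G.Adj a b

end EnclavelessGame

/-!
Every play of the game ends in a maximal enclaveless set, so both game numbers are at least the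
lower enclaveless number `ψ(G)`, and it suffices to show `n ≤ 2|S|` for a maximal enclaveless
set `S`. Adding a vertex `v ∉ S` to `S` creates an enclave, so either `N(v) ⊆ S`, or `v` has an
`(V \ S)`-external private neighbor in `S`. The vertices of the second kind inject into `S` via
such neighbors. Those of the first kind form an independent set, each with at least two
neighbors among the remaining vertices of `S`, while claw-freeness lets a vertex of `S` have at
most two of them; double counting gives `|V \ S| ≤ |S|`.
-/

namespace EnclavelessGame

variable {V : Type*} {G : SimpleGraph V}

theorem IsEnclaveless.mono {S T : Finset V} (hT : IsEnclaveless G T) (hST : S ⊆ T) :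
    IsEnclaveless G S :=
  fun v ⟨hvS, hN⟩ => hT v ⟨hST hvS, fun u hu => hST (hN u hu)⟩

theorem isEnclaveless_empty : IsEnclaveless G (∅ : Finset V) :=
  fun v ⟨hv, _⟩ => Finset.notMem_empty v hv

theorem exists_isMaximalEnclaveless [Finite V] (G : SimpleGraph V) :
    ∃ S, IsMaximalEnclaveless G S := by
  obtain ⟨S, -, hS⟩ := Finite.exists_le_maximal (isEnclaveless_empty (G := G))
  exact ⟨S, hS.1, fun T hST hT => le_antisymm (hS.2 hT hST) hST⟩

def IsExternalPrivateNeighbor (G : SimpleGraph V) (D : Finset V) (v w : V) : Prop :=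
  w ∉ D ∧ G.Adj v w ∧ ∀ u ∈ D, G.Adj u w → u = v

theorem ClawFree.card_filter_adj_le_two [DecidableRel G.Adj] (hclaw : ClawFree G)
    {B : Finset V} (hB : G.IsIndepSet (B : Set V)) (w : V) :
    (B.filter (G.Adj · w)).card ≤ 2 := by
  by_contra! h
  obtain ⟨T, hTB, hT⟩ := Finset.exists_subset_card_eq h
  refine hclaw ⟨w, T, hT, fun u hu => (Finset.mem_filter.mp (hTB hu)).2.symm, ?_⟩
  exact fun a ha b hb =>
    hB (Finset.mem_filter.mp (hTB ha)).1 (Finset.mem_filter.mp (hTB hb)).1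

theorem ClawFree.card_le_card_of_neighborFinset_subset [Fintype V] [DecidableRel G.Adj]
    (hclaw : ClawFree G) {B T : Finset V} (hdisj : Disjoint B T)
    (hBT : ∀ b ∈ B, G.neighborFinset b ⊆ T) (hdeg : ∀ b ∈ B, 2 ≤ G.degree b) :
    B.card ≤ T.card := by
  have hindep : G.IsIndepSet (B : Set V) := fun a ha b hb _ hab =>
    Finset.disjoint_left.mp hdisj hb (hBT a ha ((G.mem_neighborFinset a b).mpr hab))
  have hcount := Finset.card_mul_le_card_mul (r := G.Adj) (s := B) (t := T) (m := 2) (n := 2)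
    (fun b hb => (hdeg b hb).trans <| (G.card_neighborFinset_eq_degree b).ge.trans <|
      Finset.card_le_card fun u hu =>
        Finset.mem_filter.mpr ⟨hBT b hb hu, (G.mem_neighborFinset b u).mp hu⟩)
    (fun w _ => hclaw.card_filter_adj_le_two hindep w)
  omega

variable [Fintype V] [DecidableEq V]

theorem IsMaximalEnclaveless.subset_or_exists_externalPrivateNeighbor {S : Finset V}
    (hS : IsMaximalEnclaveless G S) {v : V} (hv : v ∉ S) :
    (∀ u, G.Adj v u → u ∈ S) ∨ ∃ w, IsExternalPrivateNeighbor G Sᶜ v w := by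
  have hnot : ¬IsEnclaveless G (insert v S) := fun h =>
    hv (hS.2 _ (Finset.subset_insert v S) h ▸ Finset.mem_insert_self v S)
  obtain ⟨w, hw, hNw⟩ : ∃ w, IsEnclave G (insert v S) w := by
    simpa [IsEnclaveless] using hnot
  rcases Finset.mem_insert.mp hw with rfl | hwS
  · refine .inl fun u hu => ?_
    exact (Finset.mem_insert.mp (hNw u hu)).resolve_left (G.ne_of_adj hu).symm
  · have hvw : G.Adj v w := by
      by_contra hvw
      refine hS.1 w ⟨hwS, fun u hu => ?_⟩
      exact (Finset.mem_insert.mp (hNw u hu)).resolve_left fun huv => hvw (huv ▸ hu.symm)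
    refine .inr ⟨w, Finset.notMem_compl.mpr hwS, hvw, fun u hu huw => ?_⟩
    exact (Finset.mem_insert.mp (hNw u huw.symm)).resolve_right (Finset.mem_compl.mp hu)

variable [DecidableRel G.Adj]

theorem IsMaximalEnclaveless.card_compl_le_card (hclaw : ClawFree G) (hdeg : 2 ≤ G.minDegree)
    {S : Finset V} (hS : IsMaximalEnclaveless G S) : Sᶜ.card ≤ S.card := by
  classical
  set A := Sᶜ.filter fun v => ∃ w, IsExternalPrivateNeighbor G Sᶜ v w
  set B := Sᶜ.filter fun v => ¬∃ w, IsExternalPrivateNeighbor G Sᶜ v w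
  choose! f hf using fun v (hv : v ∈ A) => (Finset.mem_filter.mp hv).2
  have hfS : A.image f ⊆ S := by
    simp only [Finset.image_subset_iff]
    exact fun v hv => Finset.notMem_compl.mp (hf v hv).1
  have hf_inj : Set.InjOn f A := fun v hv v' hv' hvv' =>
    ((hf v hv).2.2 v' (Finset.mem_filter.mp hv').1 (hvv' ▸ (hf v' hv').2.1)).symm
  have hB : ∀ b ∈ B, G.neighborFinset b ⊆ S \ A.image f := by
    intro b hb u hu
    obtain ⟨hbS, hb_epn⟩ := Finset.mem_filter.mp hb
    have hbu := (G.mem_neighborFinset b u).mp hu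
    have huS := ((hS.subset_or_exists_externalPrivateNeighbor
      (Finset.mem_compl.mp hbS)).resolve_right hb_epn) u hbu
    refine Finset.mem_sdiff.mpr ⟨huS, fun huA => ?_⟩
    obtain ⟨a, ha, rfl⟩ := Finset.mem_image.mp huA
    exact hb_epn ((hf a ha).2.2 b hbS hbu ▸ (Finset.mem_filter.mp ha).2)
  have hdisj : Disjoint B (S \ A.image f) := Finset.disjoint_left.mpr fun b hb hbS =>
    Finset.mem_compl.mp (Finset.mem_filter.mp hb).1 (Finset.mem_sdiff.mp hbS).1
  calc Sᶜ.card = A.card + B.card := (Finset.card_filter_add_card_filter_not _).symm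
    _ ≤ (A.image f).card + (S \ A.image f).card :=
      add_le_add (Finset.card_image_of_injOn hf_inj).ge <|
        hclaw.card_le_card_of_neighborFinset_subset hdisj hB
          fun b _ => hdeg.trans (G.minDegree_le_degree b)
    _ = S.card := by rw [add_comm, Finset.card_sdiff_add_card_eq_card hfS]

theorem ClawFree.card_le_two_mul_lowerEnclavelessNum (hclaw : ClawFree G)
    (hdeg : 2 ≤ G.minDegree) : Fintype.card V ≤ 2 * lowerEnclavelessNum G := by
  obtain ⟨S, hS, hψ⟩ :
      lowerEnclavelessNum G ∈ {k | ∃ S, IsMaximalEnclaveless G S ∧ S.card = k} :=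
    let ⟨S, hS⟩ := exists_isMaximalEnclaveless G
    Nat.sInf_mem ⟨_, S, hS, rfl⟩
  have := Finset.card_add_card_compl S
  have := hS.card_compl_le_card hclaw hdeg
  omega

@[simp]
theorem mem_playableSet {S : Finset V} {v : V} :
    v ∈ playableSet G S ↔ v ∉ S ∧ IsEnclaveless G (insert v S) := by
  simp [playableSet]

theorem isMaximalEnclaveless_of_not_nonempty_playableSet {S : Finset V}
    (hS : IsEnclaveless G S) (h : ¬(playableSet G S).Nonempty) : IsMaximalEnclaveless G S := by
  refine ⟨hS, fun T hST hT => ?_⟩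
  by_contra hne
  obtain ⟨v, hvT, hvS⟩ := Finset.exists_of_ssubset (hST.ssubset_of_ne (Ne.symm hne))
  exact h ⟨v, mem_playableSet.mpr ⟨hvS, hT.mono (Finset.insert_subset hvT hST)⟩⟩

theorem gameVal_of_not_nonempty {S : Finset V} (h : ¬(playableSet G S).Nonempty) (b : Bool) :
    gameVal G b S = S.card := by
  rw [gameVal, dif_neg h]

theorem exists_gameVal_insert_le {S : Finset V} (h : (playableSet G S).Nonempty) (b : Bool) :
    ∃ v ∈ playableSet G S, gameVal G (!b) (insert v S) ≤ gameVal G b S := by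
  cases b with
  | true =>
    obtain ⟨v, hv⟩ := h
    refine ⟨v, hv, ?_⟩
    conv_rhs => rw [gameVal, dif_pos ⟨v, hv⟩, if_pos rfl]
    exact Finset.le_sup' (fun v : playableSet G S => gameVal G false (insert v.1 S))
      (Finset.mem_attach _ ⟨v, hv⟩)
  | false =>
    obtain ⟨v, -, hv⟩ := Finset.exists_mem_eq_inf' (Finset.attach_nonempty_iff.mpr h)
      fun v : playableSet G S => gameVal G true (insert v.1 S)
    refine ⟨v, v.2, ?_⟩
    conv_rhs => rw [gameVal, dif_pos h]
    exact hv.ge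

theorem lowerEnclavelessNum_le_gameVal (b : Bool) {S : Finset V} (hS : IsEnclaveless G S) :
    lowerEnclavelessNum G ≤ gameVal G b S := by
  by_cases h : (playableSet G S).Nonempty
  · obtain ⟨v, hv, hle⟩ := exists_gameVal_insert_le h b
    have hv' := mem_playableSet.mp hv
    exact (lowerEnclavelessNum_le_gameVal (!b) hv'.2).trans hle
  · rw [gameVal_of_not_nonempty h]
    exact Nat.sInf_le ⟨S, isMaximalEnclaveless_of_not_nonempty_playableSet hS h, rfl⟩
termination_by Sᶜ.card
decreasing_by
  rw [Finset.compl_insert]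
  exact Finset.card_erase_lt_of_mem (Finset.mem_compl.mpr hv'.1)

theorem clawFree_minDegreeTwo_gameNums_ge_general {V : Type*} [Fintype V] [DecidableEq V]
    (G : SimpleGraph V) [DecidableRel G.Adj]
    (hclaw : ClawFree G) (hdeg : 2 ≤ G.minDegree) :
    Fintype.card V ≤ 2 * maxStartGameNum G ∧ Fintype.card V ≤ 2 * minStartGameNum G := by
  have hψ := hclaw.card_le_two_mul_lowerEnclavelessNum hdeg
  have hgame (b : Bool) := lowerEnclavelessNum_le_gameVal (G := G) b isEnclaveless_empty
  exact ⟨hψ.trans (Nat.mul_le_mul_left 2 (hgame true)),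
    hψ.trans (Nat.mul_le_mul_left 2 (hgame false))⟩

/-- If `G` is a connected claw-free finite simple graph of order `n` with minimum degree
at least `2`, then `Ψ⁺_g(G) ≥ n/2` and `Ψ⁻_g(G) ≥ n/2`, i.e. `2·Ψ⁺_g(G) ≥ n` and
`2·Ψ⁻_g(G) ≥ n`. -/
theorem clawFree_minDegreeTwo_gameNums_ge {V : Type*} [Fintype V] [DecidableEq V]
    (G : SimpleGraph V) [DecidableRel G.Adj]
    (hconn : G.Connected) (hclaw : ClawFree G) (hdeg : 2 ≤ G.minDegree) :
    Fintype.card V ≤ 2 * maxStartGameNum G ∧ Fintype.card V ≤ 2 * minStartGameNum G :=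
  clawFree_minDegreeTwo_gameNums_ge_general G hclaw hdeg

end EnclavelessGame
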